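/- Let r ≥ 43 and b be coprime integers with 0 < b < r. Then Σ_{j=1}^{11} \overline{bj}(r−\overline{bj})/(2r) ≥ 27, where \overline{x} is the residue of x mod r. -/

import Mathlib

/-!
Fold each residue `x = bj mod r` to `min x (r - x)`; this keeps `x (r - x)` unchanged. For
`1 ≤ j ≤ n` with `2n < r`, coprimality makes the folded residues distinct (two of them agree only
if `bj ≡ ±bk`, i.e. `j ≡ ±k (mod r)`), and they lie in `[1, r/2]`, where `y (r - y)` is
increasing. So the sum is at least `∑_{k=1}^{n} k (r - k)`, which for `n = 11` is
`66 r - 506 ≥ 54 r` once `r ≥ 43`.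
-/

open Finset

theorem sum_Icc_card_le_sum_of_monotoneOn {M : Type*} [AddCommMonoid M] [PartialOrder M]
    [IsOrderedAddMonoid M] {g : ℕ → M} {N : ℕ} (hg : MonotoneOn g (Set.Icc 1 N))
    {S : Finset ℕ} (hS : S ⊆ Icc 1 N) :
    ∑ k ∈ Icc 1 #S, g k ≤ ∑ x ∈ S, g x := by
  induction S using Finset.induction_on_max with
  | empty => simp
  | insert a s hlt ih =>
    have has : a ∉ s := fun h => lt_irrefl a (hlt a h)
    have haN : a ∈ Icc 1 N := hS (mem_insert_self a s)
    have hsN : s ⊆ Icc 1 N := (subset_insert a s).trans hS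
    have hcard : #s + 1 ≤ a := by
      have hs : s ⊆ Icc 1 (a - 1) := fun x hx => by
        have := hsN hx; have := hlt x hx; simp only [mem_Icc] at *; omega
      have := card_le_card hs
      rw [Nat.card_Icc] at this
      simp only [mem_Icc] at haN
      omega
    have hcardN : #s + 1 ∈ Set.Icc 1 N := ⟨by omega, hcard.trans (mem_Icc.1 haN).2⟩
    rw [card_insert_of_notMem has, sum_insert has, sum_Icc_succ_top (by omega), add_comm]
    exact add_le_add (hg hcardN (by simpa using haN) hcard) (ih hsN)

theorem monotoneOn_mul_sub (r : ℕ) :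
    MonotoneOn (fun y : ℕ => (y : ℚ) * (r - y)) (Set.Icc 1 (r / 2)) := by
  intro k _ y hy hky
  have hky : (k : ℚ) ≤ y := by exact_mod_cast hky
  have hyr : 2 * (y : ℚ) ≤ r := by exact_mod_cast (by have := hy.2; omega : 2 * y ≤ r)
  simp only
  nlinarith

def foldMod (r x : ℕ) : ℕ := min x (r - x)

theorem foldMod_mul_sub {r x : ℕ} (hx : x ≤ r) :
    (foldMod r x : ℚ) * (r - foldMod r x) = x * (r - x) := by
  rcases min_cases x (r - x) with ⟨h, _⟩ | ⟨h, _⟩ <;> rw [foldMod, h]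
  rw [Nat.cast_sub hx]
  ring

theorem foldMod_eq_foldMod {r x y : ℕ} (hx : x < r) (hy : y < r)
    (h : foldMod r x = foldMod r y) : x = y ∨ x + y = r := by
  unfold foldMod at h
  omega

theorem mul_mod_ne_zero {r b j : ℕ} (hcop : Nat.Coprime b r) (hj : 0 < j) (hjr : j < r) :
    b * j % r ≠ 0 := fun h =>
  absurd (Nat.le_of_dvd hj (hcop.symm.dvd_of_dvd_mul_left (Nat.dvd_of_mod_eq_zero h))) (by omega)

theorem injOn_foldMod_mul_mod {r b n : ℕ} (hcop : Nat.Coprime b r) (hn : 2 * n < r) :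
    Set.InjOn (fun j => foldMod r (b * j % r)) (Icc 1 n) := by
  intro j hj k hk hjk
  simp only [coe_Icc, Set.mem_Icc] at hj hk
  have hr : 0 < r := by omega
  rcases foldMod_eq_foldMod (Nat.mod_lt _ hr) (Nat.mod_lt _ hr) hjk with h | h
  · have hmod : j ≡ k [MOD r] := Nat.ModEq.cancel_left_of_coprime hcop.symm h
    rwa [Nat.ModEq, Nat.mod_eq_of_lt (by omega), Nat.mod_eq_of_lt (by omega)] at hmod
  · have hsum : b * (j + k) % r = 0 := by rw [mul_add, Nat.add_mod, h, Nat.mod_self]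
    exact absurd hsum (mul_mod_ne_zero hcop (by omega) (by omega))

theorem sum_Icc_le_sum_mul_mod {r b n : ℕ} (hcop : Nat.Coprime b r) (hn : 2 * n < r) :
    ∑ k ∈ Icc 1 n, (k : ℚ) * (r - k) ≤
      ∑ j ∈ Icc 1 n, ((b * j % r : ℕ) : ℚ) * (r - (b * j % r : ℕ)) := by
  set m : ℕ → ℕ := fun j => foldMod r (b * j % r)
  have hinj := injOn_foldMod_mul_mod hcop hn
  have hrange : (Icc 1 n).image m ⊆ Icc 1 (r / 2) := by
    intro y hy
    obtain ⟨j, hj, rfl⟩ := mem_image.1 hy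
    have hj := mem_Icc.1 hj
    have hne := mul_mod_ne_zero hcop (b := b) (by omega) (by omega : j < r)
    have hlt := Nat.mod_lt (b * j) (by omega : 0 < r)
    simp only [m, foldMod, mem_Icc]
    omega
  have key := sum_Icc_card_le_sum_of_monotoneOn (monotoneOn_mul_sub r) hrange
  rw [card_image_of_injOn hinj, Nat.card_Icc, Nat.add_sub_cancel, sum_image hinj] at key
  refine key.trans_eq (sum_congr rfl fun j _ => ?_)
  exact foldMod_mul_sub (Nat.mod_lt _ (by omega)).le

theorem stmt_7_general (r b : ℕ) (hr : 43 ≤ r)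
    (hcop : Nat.Coprime b r) :
    ∑ j ∈ Finset.Icc 1 11,
        ((b * j % r : ℕ) : ℚ) * ((r : ℚ) - (b * j % r : ℕ)) / (2 * r) ≥ 27 := by
  have hrq : (43 : ℚ) ≤ r := by exact_mod_cast hr
  have hbound := sum_Icc_le_sum_mul_mod (n := 11) hcop (by omega)
  have hmin : ∑ k ∈ Icc 1 11, ((k : ℕ) : ℚ) * (r - k) = 66 * r - 506 := by
    simp only [sum_Icc_succ_top, Nat.reduceLeDiff, Icc_self, sum_singleton]
    ring
  rw [ge_iff_le, ← sum_div, le_div_iff₀ (by positivity)]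
  linarith

/-- l(Q,12) ≥ 27 for any basket singularity of index r ≥ 43. -/
theorem stmt_7 (r b : ℕ) (hr : 43 ≤ r) (hb0 : 0 < b) (hbr : b < r)
    (hcop : Nat.Coprime b r) :
    ∑ j ∈ Finset.Icc 1 11,
        ((b * j % r : ℕ) : ℚ) * ((r : ℚ) - (b * j % r : ℕ)) / (2 * r) ≥ 27 :=
  stmt_7_general r b hr hcop
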